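/- Define c_d = Γ(1 + d/2)^{2/d}/(1 + d/2) for positive integers d. Then the sequence (c_d)_{d≥1} is nonincreasing in d and converges to 1/e as d → ∞; in particular, c_d ≥ 1/e for every d ≥ 1. -/

import Mathlib

/-!
Put `F y = log Γ(y) - (y - 1) log y`, so that `log c_d` is the slope of the secant of `F` between
`1` and `1 + d/2` (note `F 1 = 0`). `F` is concave on `(0, ∞)`: it is the pointwise limit of
`log (n^y n! / (y (y+1) ⋯ (y+n))) - (y - 1) log y`, whose second derivative
`∑_{m ≤ n} (y+m)⁻² - y⁻¹ - y⁻²` is nonpositive because `(y+m)⁻² ≤ (y+m-1)⁻¹ - (y+m)⁻¹` telescopes.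
Secant slopes of a concave function decrease, so `c_d` is nonincreasing. Along even dimensions,
`log c_{2m} = log m! / m - log (m+1) → -1` by Stirling's formula, and monotonicity carries this
limit to the whole sequence, which therefore stays above `1/e`.
-/

/-- The sharp constant `c_d = Γ(1+d/2)^{2/d}/(1+d/2)` of the `d`-dimensional ∞-Rényi
entropy power inequality. -/
noncomputable def cRenyi (d : ℕ) : ℝ :=
  (Real.Gamma (1 + (d : ℝ) / 2)) ^ ((2 : ℝ) / (d : ℝ)) / (1 + (d : ℝ) / 2)

open Real Filter Set Topology

theorem ConcaveOn.of_tendsto {ι E : Type*} [AddCommMonoid E] [Module ℝ E] {l : Filter ι} [l.NeBot]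
    {s : Set E} {F : ι → E → ℝ} {f : E → ℝ} (hF : ∀ᶠ i in l, ConcaveOn ℝ s (F i))
    (hf : ∀ x ∈ s, Tendsto (fun i => F i x) l (𝓝 (f x))) : ConcaveOn ℝ s f := by
  obtain ⟨i, hi⟩ := hF.exists
  refine ⟨hi.1, fun x hx y hy a b ha hb hab => ?_⟩
  refine le_of_tendsto_of_tendsto (((hf x hx).const_smul a).add ((hf y hy).const_smul b))
    (hf _ (hi.1 hx hy ha hb hab)) ?_
  filter_upwards [hF] with j hj using hj.2 hx hy ha hb hab

theorem sum_range_inv_add_sq_le (n : ℕ) {y : ℝ} (hy : 0 < y) :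
    ∑ m ∈ Finset.range (n + 1), ((y + m) ^ 2)⁻¹ ≤ y⁻¹ + (y ^ 2)⁻¹ - (y + n)⁻¹ := by
  induction n with
  | zero => simp
  | succ n ih =>
    rw [Finset.sum_range_succ]
    have hstep : ((y + (n + 1 : ℕ)) ^ 2)⁻¹ ≤ (y + n)⁻¹ - (y + (n + 1 : ℕ))⁻¹ := by
      push_cast
      rw [inv_sub_inv (by positivity) (by positivity), show y + (n + 1) - (y + n) = 1 by ring,
        one_div, sq]
      exact inv_anti₀ (by positivity) (by gcongr; linarith)
    linarith

open BohrMollerup in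
theorem hasDerivAt_logGammaSeq (n : ℕ) {y : ℝ} (hy : 0 < y) :
    HasDerivAt (fun y => logGammaSeq y n) (log n - ∑ m ∈ Finset.range (n + 1), (y + m)⁻¹) y := by
  have hsum : HasDerivAt (fun y => ∑ m ∈ Finset.range (n + 1), log (y + m))
      (∑ m ∈ Finset.range (n + 1), (y + m)⁻¹) y := by
    refine HasDerivAt.fun_sum fun m _ => ?_
    simpa using ((hasDerivAt_id y).add_const (m : ℝ)).log (by positivity)
  exact (((hasDerivAt_id' y).mul_const (log n)).add_const _).fun_sub hsum |>.congr_deriv (by ring)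

theorem hasDerivAt_sum_range_inv_add (n : ℕ) {y : ℝ} (hy : 0 < y) :
    HasDerivAt (fun y : ℝ => ∑ m ∈ Finset.range (n + 1), (y + m)⁻¹)
      (-∑ m ∈ Finset.range (n + 1), ((y + m) ^ 2)⁻¹) y := by
  rw [← Finset.sum_neg_distrib]
  refine HasDerivAt.fun_sum fun m _ => ?_
  exact (((hasDerivAt_id' y).add_const (m : ℝ)).fun_inv (by positivity)).congr_deriv (by ring)

theorem hasDerivAt_sub_one_mul_log {y : ℝ} (hy : 0 < y) :
    HasDerivAt (fun y => (y - 1) * log y) (log y + 1 - y⁻¹) y := by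
  refine (((hasDerivAt_id' y).sub_const 1).fun_mul (hasDerivAt_log hy.ne')).congr_deriv ?_
  field_simp
  ring

open BohrMollerup in
theorem concaveOn_logGammaSeq_sub_mul_log (n : ℕ) :
    ConcaveOn ℝ (Ioi 0) (fun y => logGammaSeq y n - (y - 1) * log y) := by
  have hderiv : ∀ y ∈ Ioi (0 : ℝ), HasDerivAt (fun y => logGammaSeq y n - (y - 1) * log y)
      (log n - ∑ m ∈ Finset.range (n + 1), (y + m)⁻¹ - (log y + 1 - y⁻¹)) y :=
    fun y hy => (hasDerivAt_logGammaSeq n hy).sub (hasDerivAt_sub_one_mul_log hy)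
  have hderiv2 : ∀ y ∈ Ioi (0 : ℝ),
      HasDerivAt (fun y : ℝ => log n - ∑ m ∈ Finset.range (n + 1), (y + m)⁻¹ - (log y + 1 - y⁻¹))
        (∑ m ∈ Finset.range (n + 1), ((y + m) ^ 2)⁻¹ - y⁻¹ - (y ^ 2)⁻¹) y := by
    intro y hy
    refine (((hasDerivAt_sum_range_inv_add n hy).const_sub _).sub
      (((hasDerivAt_log hy.ne').add_const 1).sub (hasDerivAt_inv hy.ne'))).congr_deriv ?_
    ring
  refine concaveOn_of_hasDerivWithinAt2_nonpos (convex_Ioi 0)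
    (fun y hy => (hderiv y hy).continuousAt.continuousWithinAt)
    (fun y hy => (hderiv y (interior_subset hy)).hasDerivWithinAt)
    (fun y hy => (hderiv2 y (interior_subset hy)).hasDerivWithinAt) fun y hy => ?_
  rw [interior_Ioi, mem_Ioi] at hy
  have := sum_range_inv_add_sq_le n hy
  have : 0 < (y + n)⁻¹ := by positivity
  linarith

theorem concaveOn_log_Gamma_sub_mul_log :
    ConcaveOn ℝ (Ioi 0) (fun y => log (Gamma y) - (y - 1) * log y) :=
  .of_tendsto (l := atTop) (.of_forall concaveOn_logGammaSeq_sub_mul_log)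
    fun _ hy => (BohrMollerup.tendsto_log_gamma hy).sub_const _

noncomputable def logCRenyi (x : ℝ) : ℝ := (log (Gamma (1 + x)) - x * log (1 + x)) / x

theorem antitoneOn_logCRenyi : AntitoneOn logCRenyi (Ioi 0) := by
  intro x hx y hy hxy
  rw [mem_Ioi] at hx hy
  have hslope := concaveOn_log_Gamma_sub_mul_log.neg.secant_mono (a := 1) (x := 1 + x) (y := 1 + y)
    (mem_Ioi.2 one_pos) (mem_Ioi.2 (by linarith)) (mem_Ioi.2 (by linarith))
    (lt_add_of_pos_right 1 hx).ne' (lt_add_of_pos_right 1 hy).ne' (by linarith)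
  simpa only [Pi.neg_apply, Gamma_one, log_one, sub_self, zero_mul, add_sub_cancel_left, neg_zero,
    sub_zero, neg_div, neg_le_neg_iff, logCRenyi] using hslope

theorem cRenyi_eq_exp_logCRenyi {d : ℕ} (hd : d ≠ 0) : cRenyi d = exp (logCRenyi (d / 2)) := by
  have hGamma : 0 < Gamma (1 + d / 2) := Gamma_pos_of_pos (by positivity)
  rw [cRenyi, logCRenyi, rpow_def_of_pos hGamma, sub_div, mul_div_cancel_left₀ _ (by positivity),
    exp_sub, exp_log (by positivity), div_div_eq_mul_div, mul_div_assoc]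

open Stirling in
theorem tendsto_logCRenyi_natCast : Tendsto (fun m : ℕ => logCRenyi m) atTop (𝓝 (-1)) := by
  have hstirling : Tendsto (fun m : ℕ => log (stirlingSeq m) / m) atTop (𝓝 0) :=
    (tendsto_stirlingSeq_sqrt_pi.log (by positivity)).div_atTop tendsto_natCast_atTop_atTop
  have hlog : Tendsto (fun m : ℕ => log (2 * m) / (2 * m)) atTop (𝓝 0) := by
    simpa [Function.comp_def] using (tendsto_pow_log_div_mul_add_atTop 1 0 1 one_ne_zero).comp
      (tendsto_natCast_atTop_atTop.const_mul_atTop (two_pos (α := ℝ)))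
  have h := ((hstirling.add hlog).sub tendsto_log_nat_add_one_sub_log).sub_const 1
  rw [show (0 : ℝ) + 0 - 0 - 1 = -1 by norm_num] at h
  refine h.congr' ?_
  filter_upwards [eventually_ne_atTop 0] with m hm
  have hm' : (0 : ℝ) < m := by positivity
  rw [log_stirlingSeq_formula, logCRenyi, add_comm (1 : ℝ), Gamma_nat_eq_factorial,
    log_div hm'.ne' (exp_pos 1).ne', log_exp]
  field_simp
  ring

theorem cRenyi_le_cRenyi {d₁ d₂ : ℕ} (h₁ : 1 ≤ d₁) (h : d₁ ≤ d₂) : cRenyi d₂ ≤ cRenyi d₁ := by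
  rw [cRenyi_eq_exp_logCRenyi (by omega), cRenyi_eq_exp_logCRenyi (by omega)]
  have hd₁ : (0 : ℝ) < d₁ / 2 := by positivity
  exact exp_le_exp.2 <| antitoneOn_logCRenyi hd₁ (hd₁.trans_le (by gcongr)) (by gcongr)

theorem antitone_cRenyi_succ : Antitone fun n : ℕ => cRenyi (n + 1) :=
  fun _ _ h => cRenyi_le_cRenyi (by omega) (by omega)

theorem tendsto_cRenyi_two_mul : Tendsto (fun m : ℕ => cRenyi (2 * m)) atTop (𝓝 (exp (-1))) := by
  refine ((continuous_exp.tendsto _).comp tendsto_logCRenyi_natCast).congr' ?_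
  filter_upwards [eventually_ne_atTop 0] with m hm
  rw [Function.comp_apply, cRenyi_eq_exp_logCRenyi (by omega)]
  push_cast
  ring_nf

theorem tendsto_cRenyi_succ : Tendsto (fun n : ℕ => cRenyi (n + 1)) atTop (𝓝 (exp (-1))) := by
  rw [tendsto_iff_tendsto_subseq_of_antitone antitone_cRenyi_succ
    (StrictMono.tendsto_atTop (φ := fun m : ℕ => 2 * m + 1) fun _ _ h => by dsimp only; omega)]
  exact (tendsto_cRenyi_two_mul.comp (tendsto_add_atTop_nat 1)).congr fun m => rfl

/-- the sequence `(c_d)_{d ≥ 1}` is nonincreasing, converges to `1/e`, and in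
particular is bounded below by `1/e`. -/
theorem stmt19 :
    (∀ d₁ d₂ : ℕ, 1 ≤ d₁ → d₁ ≤ d₂ → cRenyi d₂ ≤ cRenyi d₁) ∧
    Filter.Tendsto (fun d : ℕ => cRenyi d) Filter.atTop (nhds (1 / Real.exp 1)) ∧
    (∀ d : ℕ, 1 ≤ d → 1 / Real.exp 1 ≤ cRenyi d) := by
  have hexp : 1 / exp 1 = exp (-1) := by rw [exp_neg, one_div]
  refine ⟨fun _ _ => cRenyi_le_cRenyi, ?_, fun d hd => ?_⟩
  · rw [hexp, ← tendsto_add_atTop_iff_nat 1]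
    exact tendsto_cRenyi_succ
  · obtain ⟨n, rfl⟩ := Nat.exists_eq_add_of_le' hd
    exact hexp ▸ antitone_cRenyi_succ.le_of_tendsto tendsto_cRenyi_succ n
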